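/- Newton's identities consequence: let A be a real symmetric n×n matrix (or a self-adjoint endomorphism of an n-dimensional real inner product space) and K > 0, N a natural number with N ≤ n. If trace(A^s) = N·K^s for every positive integer s, then the eigenvalues of A are exactly K with multiplicity N and 0 with multiplicity n - N. -/

import Mathlib

/-! The identity `∑ᵢ (λᵢ (λᵢ - K))² = p₄ - 2K p₃ + K² p₂` for the power sums `pₛ = ∑ᵢ λᵢ^s`
turns the hypotheses for `s = 2, 3, 4` into `∑ᵢ (λᵢ (λᵢ - K))² = N K⁴ (1 - 2 + 1) = 0`, so every
eigenvalue is `0` or `K`. The case `s = 1` then counts the eigenvalues equal to `K`. -/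

open Finset

variable {ι R : Type*} [Fintype ι]

theorem sum_sq_mul_sub_eq_powerSum [CommRing R] (l : ι → R) (K : R) :
    ∑ i, (l i * (l i - K)) ^ 2 = ∑ i, l i ^ 4 - 2 * K * ∑ i, l i ^ 3 + K ^ 2 * ∑ i, l i ^ 2 := by
  simp only [mul_sum, ← sum_sub_distrib, ← sum_add_distrib]
  exact sum_congr rfl fun i _ => by ring

theorem forall_eq_zero_or_eq_of_powerSum [CommRing R] [LinearOrder R] [IsStrictOrderedRing R]
    (l : ι → R) (K c : R) (h2 : ∑ i, l i ^ 2 = c * K ^ 2) (h3 : ∑ i, l i ^ 3 = c * K ^ 3)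
    (h4 : ∑ i, l i ^ 4 = c * K ^ 4) (i : ι) : l i = 0 ∨ l i = K := by
  have hzero : ∑ i, (l i * (l i - K)) ^ 2 = 0 := by
    rw [sum_sq_mul_sub_eq_powerSum, h2, h3, h4]
    ring
  have hi : (l i * (l i - K)) ^ 2 = 0 :=
    (sum_eq_zero_iff_of_nonneg fun j _ => sq_nonneg _).1 hzero i (mem_univ i)
  simpa [sub_eq_zero] using hi

theorem sum_eq_card_filter_nsmul_of_forall_eq_zero_or_eq [AddCommMonoid R] (l : ι → R) (K : R)
    [DecidablePred fun i => l i = K] (hl : ∀ i, l i = 0 ∨ l i = K) :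
    ∑ i, l i = #{i | l i = K} • K :=
  calc ∑ i, l i = ∑ i with l i = K, l i :=
        (sum_filter_of_ne fun i _ hi => (hl i).resolve_left hi).symm
    _ = ∑ i with l i = K, K := sum_congr rfl fun _ hi => (mem_filter.1 hi).2
    _ = #{i | l i = K} • K := sum_const K

theorem stmt_4_general (n N : ℕ) (K : ℝ) (hK : 0 < K) (l : Fin n → ℝ)
    (h : ∀ s : ℕ, 1 ≤ s → ∑ i, l i ^ s = N * K ^ s) :
    ∃ T : Finset (Fin n), T.card = N ∧ (∀ i ∈ T, l i = K) ∧ ∀ i ∉ T, l i = 0 := by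
  classical
  have hl := forall_eq_zero_or_eq_of_powerSum l K N (h 2 (by norm_num)) (h 3 (by norm_num))
    (h 4 (by norm_num))
  refine ⟨({i | l i = K} : Finset (Fin n)), ?_, fun i hi => (mem_filter.1 hi).2,
    fun i hi => (hl i).resolve_right fun hiK => hi (by simp [hiK])⟩
  have h1 := h 1 le_rfl
  simp only [pow_one] at h1
  rw [sum_eq_card_filter_nsmul_of_forall_eq_zero_or_eq l K hl,
    nsmul_eq_mul] at h1
  exact_mod_cast mul_right_cancel₀ hK.ne' h1

/-- Newton's identities consequence: if the `n` real eigenvalues `λᵢ` of a symmetric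
endomorphism satisfy `∑ᵢ λᵢ^s = N·K^s` for all `s ≥ 1`, with `K > 0` and `N ≤ n`,
then exactly `N` of the eigenvalues equal `K` and the remaining `n - N` equal `0`. -/
theorem stmt_4 (n N : ℕ) (hN : N ≤ n) (K : ℝ) (hK : 0 < K) (l : Fin n → ℝ)
    (h : ∀ s : ℕ, 1 ≤ s → ∑ i, l i ^ s = N * K ^ s) :
    ∃ T : Finset (Fin n), T.card = N ∧ (∀ i ∈ T, l i = K) ∧ ∀ i ∉ T, l i = 0 :=
  stmt_4_general n N K hK l h
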